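/- arXiv:2305.00745 — 4 statements merged into one kernel-verified Lean document; each statement's English description precedes it below -/
import Mathlib

section
/- For every T > 0 and d ≥ 1 there exists C > 0 such that for all 0 < t ≤ T: ( ∫_{ℝ^d} ξ_ℓ² · e^{-(t/4)(|ξ|² - 2)²} dξ )^{1/2} ≤ C · t^{-(d+2)/8}, for each coordinate ℓ ∈ {1,…,d}. -/
/-!
Since `ξ_ℓ² ≤ ‖ξ‖²` and `(t/4)(a - 2)² ≥ (t/8)a² - t`, the integrand is dominated by
`e^T ‖ξ‖² e^{-(t/8)‖ξ‖⁴}` for `t ≤ T`. The dilation `ξ ↦ t^{1/4} ξ` shows that the integral of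
`‖ξ‖² e^{-(t/8)‖ξ‖⁴}` is `t^{-(d+2)/4}` times its value at `t = 1`, which is finite by
integrating in polar coordinates. Taking square roots gives the exponent `-(d+2)/8`.
-/

open Real MeasureTheory Module

section RadialMoments

variable {E : Type*} [NormedAddCommGroup E] [NormedSpace ℝ E] [MeasurableSpace E] [BorelSpace E]
  [FiniteDimensional ℝ E] (μ : Measure E) [μ.IsAddHaarMeasure]

theorem integrable_rpow_norm_mul_exp_neg_mul_rpow_norm [Nontrivial E] {p q b : ℝ}
    (hp : -(finrank ℝ E : ℝ) < p) (hq : 0 < q) (hb : 0 < b) :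
    Integrable (fun x : E => ‖x‖ ^ p * exp (-b * ‖x‖ ^ q)) μ := by
  have hn : 1 ≤ finrank ℝ E := finrank_pos
  refine (integrable_fun_norm_addHaar μ (f := fun y => y ^ p * exp (-b * y ^ q))).2 ?_
  have hs : -1 < ((finrank ℝ E - 1 : ℕ) : ℝ) + p := by
    rw [Nat.cast_sub hn, Nat.cast_one]; linarith
  refine (integrableOn_rpow_mul_exp_neg_mul_rpow hs hq hb).congr_fun (fun y (hy : 0 < y) => ?_)
    measurableSet_Ioi
  simp only [smul_eq_mul, rpow_add hy, rpow_natCast, mul_assoc]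

theorem integral_rpow_norm_mul_exp_neg_mul_rpow_norm_rescale (p : ℝ) {q : ℝ} (b : ℝ) {t : ℝ}
    (hq : 0 < q) (ht : 0 < t) :
    ∫ x, ‖x‖ ^ p * exp (-(b * t) * ‖x‖ ^ q) ∂μ
      = t ^ (-((finrank ℝ E + p) / q)) * ∫ x, ‖x‖ ^ p * exp (-b * ‖x‖ ^ q) ∂μ := by
  set c : ℝ := t ^ q⁻¹
  have hc : 0 < c := rpow_pos_of_pos ht _
  have hc_pow : ∀ r : ℝ, c ^ r = t ^ (r / q) := fun r => by
    rw [← rpow_mul ht.le, inv_mul_eq_div]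
  have hdil := Measure.integral_comp_smul μ (fun x : E => ‖x‖ ^ p * exp (-b * ‖x‖ ^ q)) c
  simp only [norm_smul, norm_of_nonneg hc.le, mul_rpow hc.le (norm_nonneg _), hc_pow,
    div_self hq.ne', rpow_one] at hdil
  have hconst : ∫ x : E, t ^ (p / q) * ‖x‖ ^ p * exp (-b * (t * ‖x‖ ^ q)) ∂μ
      = t ^ (p / q) * ∫ x, ‖x‖ ^ p * exp (-(b * t) * ‖x‖ ^ q) ∂μ := by
    rw [← integral_const_mul]
    congr with x
    ring_nf
  have hjac : |(c ^ finrank ℝ E)⁻¹| = t ^ (-(finrank ℝ E / q)) := by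
    rw [← rpow_natCast, hc_pow, abs_of_pos (by positivity), rpow_neg ht.le]
  rw [hconst, hjac, smul_eq_mul] at hdil
  calc ∫ x, ‖x‖ ^ p * exp (-(b * t) * ‖x‖ ^ q) ∂μ
      = t ^ (-(p / q)) * (t ^ (p / q) * ∫ x, ‖x‖ ^ p * exp (-(b * t) * ‖x‖ ^ q) ∂μ) := by
        rw [← mul_assoc, ← rpow_add ht, neg_add_cancel, rpow_zero, one_mul]
    _ = t ^ (-((finrank ℝ E + p) / q)) * ∫ x, ‖x‖ ^ p * exp (-b * ‖x‖ ^ q) ∂μ := by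
        rw [hdil, ← mul_assoc, ← rpow_add ht]
        ring_nf

end RadialMoments

theorem exp_neg_mul_sq_sub_two_le {t : ℝ} (ht : 0 ≤ t) (a : ℝ) :
    exp (-(t / 4) * (a - 2) ^ 2) ≤ exp t * exp (-(1 / 8 * t) * a ^ 2) := by
  rw [← exp_add, exp_le_exp]
  -- `(t/4)(a - 2)² - (t/8)a² = (t/8)((a - 4)² - 8)`
  nlinarith [mul_nonneg ht (sq_nonneg (a - 4))]

theorem EuclideanSpace.sq_apply_le_norm_sq {ι : Type*} [Fintype ι] (ξ : EuclideanSpace ℝ ι)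
    (i : ι) : ξ i ^ 2 ≤ ‖ξ‖ ^ 2 := by
  simpa only [Real.norm_eq_abs, sq_abs] using
    pow_le_pow_left₀ (norm_nonneg _) (PiLp.norm_apply_le ξ i) 2

theorem EuclideanSpace.sq_apply_mul_exp_neg_le {ι : Type*} [Fintype ι] {t T : ℝ} (ht : 0 ≤ t)
    (htT : t ≤ T) (ξ : EuclideanSpace ℝ ι) (i : ι) :
    ξ i ^ 2 * exp (-(t / 4) * (‖ξ‖ ^ 2 - 2) ^ 2)
      ≤ exp T * (‖ξ‖ ^ (2 : ℝ) * exp (-(1 / 8 * t) * ‖ξ‖ ^ (4 : ℝ))) := by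
  have hexp := (exp_neg_mul_sq_sub_two_le ht (‖ξ‖ ^ 2)).trans
    (mul_le_mul_of_nonneg_right (exp_le_exp.2 htT) (exp_pos _).le)
  rw [← pow_mul] at hexp
  simp only [rpow_ofNat]
  calc ξ i ^ 2 * exp (-(t / 4) * (‖ξ‖ ^ 2 - 2) ^ 2)
      ≤ ‖ξ‖ ^ 2 * (exp T * exp (-(1 / 8 * t) * ‖ξ‖ ^ 4)) :=
        mul_le_mul (sq_apply_le_norm_sq ξ i) hexp (by positivity) (by positivity)
    _ = _ := by ring

theorem stmt4_general (d : ℕ) (T : ℝ) :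
    ∃ C > (0:ℝ), ∀ t ∈ Set.Ioc (0:ℝ) T, ∀ ℓ : Fin d,
      Real.sqrt (∫ ξ : EuclideanSpace ℝ (Fin d),
          (ξ ℓ) ^ 2 * Real.exp (-(t / 4) * (‖ξ‖ ^ 2 - 2) ^ 2))
        ≤ C * t ^ (-(((d : ℝ) + 2) / 8)) := by
  set J := ∫ ξ : EuclideanSpace ℝ (Fin d), ‖ξ‖ ^ (2 : ℝ) * exp (-(1 / 8) * ‖ξ‖ ^ (4 : ℝ))
  refine ⟨√(exp T * J) + 1, by positivity, ?_⟩
  rintro t ⟨ht, htT⟩ ℓ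
  -- makes `EuclideanSpace ℝ (Fin d)` nontrivial, as integrability via polar coordinates needs
  have : Nonempty (Fin d) := ⟨ℓ⟩
  have hintegral : ∫ ξ : EuclideanSpace ℝ (Fin d), ξ ℓ ^ 2 * exp (-(t / 4) * (‖ξ‖ ^ 2 - 2) ^ 2)
      ≤ exp T * J * t ^ (-(((d : ℝ) + 2) / 4)) := by
    have hint := integrable_rpow_norm_mul_exp_neg_mul_rpow_norm
      (volume : Measure (EuclideanSpace ℝ (Fin d))) (p := 2)
      ((neg_nonpos.2 (Nat.cast_nonneg _)).trans_lt two_pos) (by norm_num : (0 : ℝ) < 4)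
      (by positivity : 0 < 1 / 8 * t)
    refine (integral_mono_of_nonneg (.of_forall fun ξ => by positivity) (hint.const_mul _)
      (.of_forall fun ξ => EuclideanSpace.sq_apply_mul_exp_neg_le ht.le htT ξ ℓ)).trans_eq ?_
    rw [integral_const_mul, integral_rpow_norm_mul_exp_neg_mul_rpow_norm_rescale volume _ _
      (by norm_num) ht, finrank_euclideanSpace_fin]
    ring
  calc √(∫ ξ : EuclideanSpace ℝ (Fin d), ξ ℓ ^ 2 * exp (-(t / 4) * (‖ξ‖ ^ 2 - 2) ^ 2))
      ≤ √(exp T * J * t ^ (-(((d : ℝ) + 2) / 4))) := sqrt_le_sqrt hintegral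
    _ = √(exp T * J) * t ^ (-(((d : ℝ) + 2) / 8)) := by
        rw [sqrt_mul (by positivity), sqrt_eq_rpow (t ^ _), ← rpow_mul ht.le]
        ring_nf
    _ ≤ (√(exp T * J) + 1) * t ^ (-(((d : ℝ) + 2) / 8)) := by
        gcongr
        linarith

/-- L² norm estimate: for every `T > 0` and `d ≥ 1` there is `C > 0` such that for all
`0 < t ≤ T` and each coordinate `ℓ`,
`( ∫_{ℝ^d} ξ_ℓ² e^{-(t/4)(|ξ|²-2)²} dξ )^{1/2} ≤ C t^{-(d+2)/8}`. -/
theorem stmt4 (d : ℕ) (hd : 1 ≤ d) (T : ℝ) (hT : 0 < T) :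
    ∃ C > (0:ℝ), ∀ t ∈ Set.Ioc (0:ℝ) T, ∀ ℓ : Fin d,
      Real.sqrt (∫ ξ : EuclideanSpace ℝ (Fin d),
          (ξ ℓ) ^ 2 * Real.exp (-(t / 4) * (‖ξ‖ ^ 2 - 2) ^ 2))
        ≤ C * t ^ (-(((d : ℝ) + 2) / 8)) :=
  stmt4_general d T
end

section
/- Let d ≥ 1, c₅, c₆ > 0, T > 0, and 1 < q < (d+2)/(d+1). Then there exists C > 0 such that for all 0 < t ≤ T: ( ∫_{ℝ^d} | ∫₀^∞ s^{-(d+1)/2} e^{-c₅|x|²/s} γ_t(ds) |^q dx )^{1/q} ≤ C · t^{-(d(q-1)+q)/(4q)}, where γ_t(ds) = e^{-c₆ s²/t} / √(π t/(4c₆)) ds is the half-Gaussian probability measure on (0,∞). -/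
/-!
Write `γ_t` for the half-Gaussian probability measure and `k(x, s) = s^{-a} e^{-c₅|x|²/s}`.
Jensen's inequality in `s` for the probability measure `γ_t`, followed by Tonelli, gives
`∫ |∫ k(x, s) γ_t(ds)|^q dx ≤ ∫ (∫ k(x, s)^q dx) γ_t(ds)`. The inner integral is Gaussian and equals
`(π/(q c₅))^{d/2} s^{-α}` with `α = a q - d/2`, and the moments of `γ_t` are
`∫ s^p γ_t(ds) = Γ((p+1)/2)/√π · (t/c₆)^{p/2}`, finite for `p > -1`. For `a = (d+1)/2` the
condition `α < 1` is exactly `q < (d+2)/(d+1)`, and the `q`-th root of `t^{-α/2}` is the claimed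
power of `t`.
-/

open Real MeasureTheory Set Module
open scoped ENNReal

theorem lintegral_enorm_integral_rpow_le {X S E : Type*} [MeasurableSpace X] [MeasurableSpace S]
    [NormedAddCommGroup E] [NormedSpace ℝ E] (μ : Measure X) [SFinite μ] (ν : Measure S)
    [IsProbabilityMeasure ν] {k : X → S → E} (hk : StronglyMeasurable (Function.uncurry k))
    {q : ℝ} (hq : 1 ≤ q) :
    ∫⁻ x, ‖∫ s, k x s ∂ν‖ₑ ^ q ∂μ ≤ ∫⁻ s, ∫⁻ x, ‖k x s‖ₑ ^ q ∂μ ∂ν := by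
  have hq0 : 0 < q := one_pos.trans_le hq
  have jensen (x : X) : ‖∫ s, k x s ∂ν‖ₑ ^ q ≤ ∫⁻ s, ‖k x s‖ₑ ^ q ∂ν := by
    have h := eLpNorm'_le_eLpNorm'_of_exponent_le one_pos hq ν
      (hk.comp_measurable (measurable_prodMk_left (x := x))).aestronglyMeasurable
    rw [eLpNorm'_eq_lintegral_enorm, eLpNorm'_eq_lintegral_enorm] at h
    simp only [ENNReal.rpow_one, div_one, Function.comp_def, Function.uncurry_apply_pair] at h
    calc ‖∫ s, k x s ∂ν‖ₑ ^ q ≤ (∫⁻ s, ‖k x s‖ₑ ∂ν) ^ q := by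
          gcongr; exact enorm_integral_le_lintegral_enorm _
      _ ≤ ((∫⁻ s, ‖k x s‖ₑ ^ q ∂ν) ^ (1 / q)) ^ q := by gcongr
      _ = ∫⁻ s, ‖k x s‖ₑ ^ q ∂ν := by
          rw [← ENNReal.rpow_mul, one_div_mul_cancel hq0.ne', ENNReal.rpow_one]
  calc ∫⁻ x, ‖∫ s, k x s ∂ν‖ₑ ^ q ∂μ ≤ ∫⁻ x, ∫⁻ s, ‖k x s‖ₑ ^ q ∂ν ∂μ := lintegral_mono jensen
    _ = ∫⁻ s, ∫⁻ x, ‖k x s‖ₑ ^ q ∂μ ∂ν :=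
        lintegral_lintegral_swap (hk.aestronglyMeasurable.enorm.pow_const q)

theorem lintegral_ofReal_eq_of_integral_eq_of_pos {α : Type*} [MeasurableSpace α] {μ : Measure α}
    {f : α → ℝ} {A : ℝ} (hf : 0 ≤ᵐ[μ] f) (hfA : ∫ x, f x ∂μ = A) (hA : 0 < A) :
    ∫⁻ x, ENNReal.ofReal (f x) ∂μ = ENNReal.ofReal A := by
  rw [← hfA, ofReal_integral_eq_lintegral_ofReal (.of_integral_ne_zero (hfA ▸ hA.ne')) hf]

noncomputable def halfGaussianPDF (c t s : ℝ) : ℝ := exp (-c * s ^ 2 / t) / √(π * t / (4 * c))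

noncomputable def halfGaussian (c t : ℝ) : Measure ℝ :=
  (volume.restrict (Ioi 0)).withDensity fun s => ENNReal.ofReal (halfGaussianPDF c t s)

section HalfGaussian

variable {c t : ℝ}

theorem halfGaussianPDF_nonneg (c t s : ℝ) : 0 ≤ halfGaussianPDF c t s := by
  unfold halfGaussianPDF; positivity

@[fun_prop]
theorem measurable_halfGaussianPDF (c t : ℝ) : Measurable (halfGaussianPDF c t) := by
  unfold halfGaussianPDF; fun_prop

theorem setIntegral_rpow_mul_halfGaussianPDF (hc : 0 < c) (ht : 0 < t) {p : ℝ} (hp : -1 < p) :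
    ∫ s in Ioi 0, s ^ p * halfGaussianPDF c t s = Gamma ((p + 1) / 2) / √π * (t / c) ^ (p / 2) := by
  have h := integral_rpow_mul_exp_neg_mul_rpow two_pos hp (div_pos hc ht)
  simp only [rpow_two] at h
  have hsqrt : √(π * t / (4 * c)) = √π / 2 * (t / c) ^ (1 / 2 : ℝ) := by
    rw [← sqrt_eq_rpow, ← sqrt_sq (zero_le_two : (0:ℝ) ≤ 2), ← sqrt_div' _ (sq_nonneg 2),
      ← sqrt_mul' _ (by positivity)]
    ring_nf
  have hexp (s : ℝ) : exp (-c * s ^ 2 / t) = exp (-(c / t) * s ^ 2) := by ring_nf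
  have hu : 0 < t / c := div_pos ht hc
  simp only [halfGaussianPDF, hexp, mul_div_assoc', integral_div, h, hsqrt]
  rw [← inv_div t c, inv_rpow hu.le, neg_div, rpow_neg hu.le, inv_inv,
    show (p + 1) / 2 = p / 2 + 1 / 2 by ring, rpow_add hu]
  field_simp

theorem lintegral_ofReal_rpow_halfGaussian (hc : 0 < c) (ht : 0 < t) {p : ℝ} (hp : -1 < p) :
    ∫⁻ s, ENNReal.ofReal (s ^ p) ∂halfGaussian c t =
      ENNReal.ofReal (Gamma ((p + 1) / 2) / √π * (t / c) ^ (p / 2)) := by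
  rw [halfGaussian, lintegral_withDensity_eq_lintegral_mul₀ (by fun_prop) (by fun_prop)]
  simp only [Pi.mul_apply, ← ENNReal.ofReal_mul (halfGaussianPDF_nonneg c t _), mul_comm _ (_ ^ p)]
  exact lintegral_ofReal_eq_of_integral_eq_of_pos
    (ae_restrict_of_forall_mem measurableSet_Ioi fun s hs =>
      mul_nonneg (rpow_nonneg (le_of_lt hs) p) (halfGaussianPDF_nonneg c t s))
    (setIntegral_rpow_mul_halfGaussianPDF hc ht hp)
    (by have := Gamma_pos_of_pos (show 0 < (p + 1) / 2 by linarith); positivity)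

theorem isProbabilityMeasure_halfGaussian (hc : 0 < c) (ht : 0 < t) :
    IsProbabilityMeasure (halfGaussian c t) := by
  have h := lintegral_ofReal_rpow_halfGaussian hc ht (p := 0) neg_one_lt_zero
  simp only [rpow_zero, ENNReal.ofReal_one, lintegral_one, zero_add, zero_div, mul_one,
    Gamma_one_half_eq, div_self (sqrt_pos.2 pi_pos).ne'] at h
  exact ⟨h⟩

theorem setIntegral_mul_halfGaussianPDF (c t : ℝ) (f : ℝ → ℝ) :
    ∫ s in Ioi 0, f s * halfGaussianPDF c t s = ∫ s, f s ∂halfGaussian c t := by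
  rw [halfGaussian, integral_withDensity_eq_integral_toReal_smul (by fun_prop)
    (.of_forall fun _ => ENNReal.ofReal_lt_top)]
  simp only [ENNReal.toReal_ofReal (halfGaussianPDF_nonneg c t _), smul_eq_mul, mul_comm]

end HalfGaussian

section Gaussian

variable {V : Type*} [NormedAddCommGroup V] [InnerProductSpace ℝ V] [FiniteDimensional ℝ V]
  [MeasurableSpace V] [BorelSpace V]

theorem lintegral_ofReal_exp_neg_mul_sq_norm {b : ℝ} (hb : 0 < b) :
    ∫⁻ x : V, ENNReal.ofReal (exp (-b * ‖x‖ ^ 2)) =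
      ENNReal.ofReal ((π / b) ^ (finrank ℝ V / 2 : ℝ)) :=
  lintegral_ofReal_eq_of_integral_eq_of_pos (.of_forall fun _ => (exp_pos _).le)
    (GaussianFourier.integral_rexp_neg_mul_sq_norm hb) (by positivity)

theorem lintegral_enorm_rpow_mul_exp_neg_mul_sq_norm_div_rpow (a : ℝ) {c s q : ℝ} (hc : 0 < c)
    (hs : 0 < s) (hq : 0 < q) :
    ∫⁻ x : V, ‖s ^ (-a) * exp (-c * ‖x‖ ^ 2 / s)‖ₑ ^ q =
      ENNReal.ofReal ((π / (q * c)) ^ (finrank ℝ V / 2 : ℝ) * s ^ (finrank ℝ V / 2 - a * q)) := by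
  have hpow (x : V) : ‖s ^ (-a) * exp (-c * ‖x‖ ^ 2 / s)‖ₑ ^ q =
      ENNReal.ofReal (s ^ (-a * q)) * ENNReal.ofReal (exp (-(q * c / s) * ‖x‖ ^ 2)) := by
    rw [Real.enorm_eq_ofReal (by positivity), ENNReal.ofReal_rpow_of_nonneg (by positivity) hq.le,
      mul_rpow (by positivity) (by positivity), ← rpow_mul hs.le, ← exp_mul,
      ENNReal.ofReal_mul (by positivity)]
    ring_nf
  rw [lintegral_congr hpow, lintegral_const_mul _ (by fun_prop),
    lintegral_ofReal_exp_neg_mul_sq_norm (by positivity), ← ENNReal.ofReal_mul (by positivity),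
    div_div_eq_mul_div, mul_div_right_comm, mul_rpow (by positivity) hs.le, sub_eq_add_neg,
    rpow_add hs]
  ring_nf

theorem integral_abs_setIntegral_mul_halfGaussianPDF_rpow_le {a c₅ c₆ t q : ℝ} (hc₅ : 0 < c₅)
    (hc₆ : 0 < c₆) (ht : 0 < t) (hq : 1 ≤ q) (ha : a * q - finrank ℝ V / 2 < 1) :
    ∫ x : V, |∫ s in Ioi 0, s ^ (-a) * exp (-c₅ * ‖x‖ ^ 2 / s) * halfGaussianPDF c₆ t s| ^ q ≤
      (π / (q * c₅)) ^ (finrank ℝ V / 2 : ℝ) *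
        (Gamma ((finrank ℝ V / 2 - a * q + 1) / 2) / √π *
          (t / c₆) ^ ((finrank ℝ V / 2 - a * q) / 2)) := by
  have := isProbabilityMeasure_halfGaussian hc₆ ht
  set n : ℝ := (finrank ℝ V : ℝ)
  have hq0 : 0 < q := one_pos.trans_le hq
  have hpos : ∀ᵐ s ∂halfGaussian c₆ t, 0 < s :=
    (withDensity_absolutelyContinuous _ _).ae_le (ae_restrict_mem measurableSet_Ioi)
  have hk : StronglyMeasurable (Function.uncurry fun (x : V) (s : ℝ) =>
      s ^ (-a) * exp (-c₅ * ‖x‖ ^ 2 / s)) := by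
    apply Measurable.stronglyMeasurable; fun_prop
  have hmoment := lintegral_ofReal_rpow_halfGaussian hc₆ ht (p := n / 2 - a * q) (by linarith)
  have hΓ := Gamma_pos_of_pos (show 0 < (n / 2 - a * q + 1) / 2 by linarith)
  rw [← ENNReal.ofReal_le_ofReal_iff (by positivity)]
  simp only [setIntegral_mul_halfGaussianPDF]
  calc ENNReal.ofReal (∫ x : V, |∫ s, s ^ (-a) * exp (-c₅ * ‖x‖ ^ 2 / s) ∂halfGaussian c₆ t| ^ q)
      ≤ ∫⁻ x : V, ‖∫ s, s ^ (-a) * exp (-c₅ * ‖x‖ ^ 2 / s) ∂halfGaussian c₆ t‖ₑ ^ q := by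
        refine (Real.ofReal_le_enorm _).trans ((enorm_integral_le_lintegral_enorm _).trans_eq ?_)
        simp only [Real.enorm_rpow_of_nonneg (abs_nonneg _) hq0.le, Real.enorm_abs]
    _ ≤ ∫⁻ s, (∫⁻ x : V, ‖s ^ (-a) * exp (-c₅ * ‖x‖ ^ 2 / s)‖ₑ ^ q) ∂halfGaussian c₆ t :=
        lintegral_enorm_integral_rpow_le _ _ hk hq
    _ = ∫⁻ s, ENNReal.ofReal ((π / (q * c₅)) ^ (n / 2)) * ENNReal.ofReal (s ^ (n / 2 - a * q))
          ∂halfGaussian c₆ t := by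
        refine lintegral_congr_ae (hpos.mono fun s hs => ?_)
        dsimp only
        rw [lintegral_enorm_rpow_mul_exp_neg_mul_sq_norm_div_rpow a hc₅ hs hq0,
          ENNReal.ofReal_mul (by positivity)]
    _ = _ := by
        rw [lintegral_const_mul _ (by fun_prop), hmoment, ← ENNReal.ofReal_mul (by positivity)]

end Gaussian

theorem stmt5_general (d : ℕ) (c₅ c₆ T q : ℝ) (hc₅ : 0 < c₅) (hc₆ : 0 < c₆)
    (hq1 : 1 < q) (hq2 : q < ((d : ℝ) + 2) / ((d : ℝ) + 1)) :
    ∃ C > (0:ℝ), ∀ t ∈ Set.Ioc (0:ℝ) T,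
      (∫ x : EuclideanSpace ℝ (Fin d),
          |∫ s in Set.Ioi (0:ℝ),
              s ^ (-(((d : ℝ) + 1) / 2)) * Real.exp (-c₅ * ‖x‖ ^ 2 / s) *
                (Real.exp (-c₆ * s ^ 2 / t) / Real.sqrt (Real.pi * t / (4 * c₆)))| ^ q) ^ (1 / q)
        ≤ C * t ^ (-(((d : ℝ) * (q - 1) + q) / (4 * q))) := by
  have ha : ((d : ℝ) + 1) / 2 * q - d / 2 < 1 := by
    rw [lt_div_iff₀ (by positivity)] at hq2; linarith
  set p : ℝ := d / 2 - (d + 1) / 2 * q with hp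
  have hΓ := Gamma_pos_of_pos (show 0 < (p + 1) / 2 by rw [hp]; linarith)
  set K : ℝ := (π / (q * c₅)) ^ ((d : ℝ) / 2) * (Gamma ((p + 1) / 2) / √π) / c₆ ^ (p / 2)
  have hK : 0 < K := by positivity
  refine ⟨K ^ (1 / q), by positivity, fun t ⟨ht, _⟩ => ?_⟩
  have h := integral_abs_setIntegral_mul_halfGaussianPDF_rpow_le (V := EuclideanSpace ℝ (Fin d))
    hc₅ hc₆ ht hq1.le (by rwa [finrank_euclideanSpace_fin])
  rw [finrank_euclideanSpace_fin] at h
  calc _ ≤ (K * t ^ (p / 2)) ^ (1 / q) := by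
        refine rpow_le_rpow (integral_nonneg fun _ => by positivity) (h.trans_eq ?_) (by positivity)
        rw [div_rpow ht.le hc₆.le]
        ring
    _ = K ^ (1 / q) * t ^ (-(((d : ℝ) * (q - 1) + q) / (4 * q))) := by
        rw [mul_rpow hK.le (by positivity), ← rpow_mul ht.le]
        congr 2
        field_simp
        ring

/-- Jensen-route `L^q` estimate of the subordinated kernel, valid for
`1 < q < (d+2)/(d+1)`. -/
theorem stmt5 (d : ℕ) (hd : 1 ≤ d) (c₅ c₆ T q : ℝ) (hc₅ : 0 < c₅) (hc₆ : 0 < c₆)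
    (hT : 0 < T) (hq1 : 1 < q) (hq2 : q < ((d : ℝ) + 2) / ((d : ℝ) + 1)) :
    ∃ C > (0:ℝ), ∀ t ∈ Set.Ioc (0:ℝ) T,
      (∫ x : EuclideanSpace ℝ (Fin d),
          |∫ s in Set.Ioi (0:ℝ),
              s ^ (-(((d : ℝ) + 1) / 2)) * Real.exp (-c₅ * ‖x‖ ^ 2 / s) *
                (Real.exp (-c₆ * s ^ 2 / t) / Real.sqrt (Real.pi * t / (4 * c₆)))| ^ q) ^ (1 / q)
        ≤ C * t ^ (-(((d : ℝ) * (q - 1) + q) / (4 * q))) :=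
  stmt5_general d c₅ c₆ T q hc₅ hc₆ hq1 hq2
end

section
/- Let d ≥ 2, c₅, c₆ > 0, T > 0, and 1 < q < d/(d-1). Then there exists C > 0 such that for all 0 < t ≤ T: ( ∫_{ℝ^d} | ∫₀^∞ s^{-(d+1)/2} e^{-c₅|x|²/s} γ_t(ds) |^q dx )^{1/q} ≤ C · t^{-(d(q-1)+q)/(4q)}, where γ_t(ds) = e^{-c₆ s²/t}/√(π t/(4c₆)) ds. -/
open Real MeasureTheory Set Module

/-!
Write `F_t(x)` for the inner integral. The substitution `s = a² σ` with `t = a⁴` gives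
`F_t(x) = t^{-(d+1)/4} F_1(t^{-1/4} x)`, so the `L^q` norm of `F_t` is exactly
`t^{-(d(q-1)+q)/(4q)}` times that of `F_1`, and it remains to see that `F_1 ∈ L^q`. The bound
`e^{-u} ≤ (κ/u)^κ` gives `F_1(x) ≲ |x|^{-2κ}` for every `κ > (d-1)/2`, the constant being a moment
of the Gaussian of order `κ - (d+1)/2 > -1`. Taking `2κq < d` near the origin and `2κq > d` at
infinity, which is possible exactly when `q < d/(d-1)`, gives an integrable majorant of `|F_1|^q`.
-/

lemma pow_pred_mul_rpow {n : ℕ} (hn : 1 ≤ n) {y : ℝ} (hy : 0 < y) (p : ℝ) :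
    y ^ (n - 1) * y ^ p = y ^ ((n : ℝ) - 1 + p) := by
  rw [← rpow_natCast, ← rpow_add hy, Nat.cast_sub hn, Nat.cast_one]

lemma exp_neg_le_div_rpow {κ u : ℝ} (hκ : 0 < κ) (hu : 0 < u) : exp (-u) ≤ (κ / u) ^ κ := by
  have h : (u / κ) ^ κ ≤ exp u :=
    calc (u / κ) ^ κ ≤ exp (u / κ) ^ κ := by gcongr; linarith [add_one_le_exp (u / κ)]
      _ = exp u := by rw [← exp_mul, div_mul_cancel₀ _ hκ.ne']
  rw [exp_neg, ← inv_div, inv_rpow (by positivity)]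
  exact inv_anti₀ (by positivity) h

lemma setIntegral_rpow_mul_exp_neg_div_mul_le {α κ u : ℝ} {φ : ℝ → ℝ} (hκ : 0 < κ) (hu : 0 < u)
    (hφ : ∀ s > 0, 0 ≤ φ s) (hint : IntegrableOn (fun s => s ^ (κ - α) * φ s) (Ioi 0)) :
    ∫ s in Ioi 0, s ^ (-α) * exp (-u / s) * φ s ≤
      (κ / u) ^ κ * ∫ s in Ioi 0, s ^ (κ - α) * φ s := by
  rw [← integral_const_mul]
  refine integral_mono_of_nonneg ?_ (hint.const_mul _) ?_
  · exact ae_restrict_of_forall_mem measurableSet_Ioi fun s (hs : 0 < s) => by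
      have := hφ s hs; positivity
  · refine ae_restrict_of_forall_mem measurableSet_Ioi fun s (hs : 0 < s) => ?_
    have hexp : exp (-u / s) ≤ (κ / u) ^ κ * s ^ κ := by
      rw [neg_div, ← mul_rpow (by positivity) hs.le, div_mul_eq_mul_div, ← div_div_eq_mul_div]
      exact exp_neg_le_div_rpow hκ (by positivity)
    calc s ^ (-α) * exp (-u / s) * φ s ≤ s ^ (-α) * ((κ / u) ^ κ * s ^ κ) * φ s := by
          have := hφ s hs; gcongr
      _ = (κ / u) ^ κ * (s ^ (κ - α) * φ s) := by
          rw [sub_eq_add_neg, rpow_add hs]; ring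

/-- The density of `γ_t` on `(0, ∞)`. -/
noncomputable def halfNormalDensity (c t s : ℝ) : ℝ := exp (-c * s ^ 2 / t) / √(π * t / (4 * c))

noncomputable def subordinatedKernel (α c₅ c₆ t r : ℝ) : ℝ :=
  ∫ s in Ioi 0, s ^ (-α) * exp (-c₅ * r ^ 2 / s) * halfNormalDensity c₆ t s

lemma halfNormalDensity_pow_four {a : ℝ} (ha : 0 < a) (c σ : ℝ) :
    halfNormalDensity c (a ^ 4) (a ^ 2 * σ) = halfNormalDensity c 1 σ / a ^ 2 := by
  have hsqrt : √(π * a ^ 4 / (4 * c)) = √(π * 1 / (4 * c)) * a ^ 2 := by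
    rw [show π * a ^ 4 / (4 * c) = π * 1 / (4 * c) * (a ^ 2) ^ 2 by ring,
      sqrt_mul' _ (by positivity), sqrt_sq (by positivity)]
  rw [halfNormalDensity, halfNormalDensity, hsqrt,
    show -c * (a ^ 2 * σ) ^ 2 / a ^ 4 = -c * σ ^ 2 / 1 by field_simp]
  ring

lemma subordinatedKernel_pow_four_mul {a : ℝ} (ha : 0 < a) (α c₅ c₆ r : ℝ) :
    subordinatedKernel α c₅ c₆ (a ^ 4) (a * r) = a ^ (-2 * α) * subordinatedKernel α c₅ c₆ 1 r := by
  have hsub := integral_comp_mul_left_Ioi'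
    (fun s => s ^ (-α) * exp (-c₅ * (a * r) ^ 2 / s) * halfNormalDensity c₆ (a ^ 4) s) 0
    (pow_pos ha 2)
  rw [mul_zero] at hsub
  rw [subordinatedKernel, subordinatedKernel, ← hsub, smul_eq_mul, ← integral_const_mul,
    ← integral_const_mul]
  refine setIntegral_congr_fun measurableSet_Ioi fun σ (hσ : 0 < σ) => ?_
  have hpow : (a ^ 2) ^ (-α) = a ^ (-2 * α) := by
    rw [← rpow_natCast, ← rpow_mul ha.le]; norm_num
  rw [halfNormalDensity_pow_four ha, mul_rpow (by positivity) hσ.le, hpow,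
    show -c₅ * (a * r) ^ 2 / (a ^ 2 * σ) = -c₅ * r ^ 2 / σ by field_simp]
  field_simp

lemma halfNormalDensity_nonneg (c t s : ℝ) : 0 ≤ halfNormalDensity c t s := by
  unfold halfNormalDensity; positivity

lemma subordinatedKernel_nonneg (α c₅ c₆ t r : ℝ) : 0 ≤ subordinatedKernel α c₅ c₆ t r :=
  setIntegral_nonneg measurableSet_Ioi fun s (hs : 0 < s) => by
    have := halfNormalDensity_nonneg c₆ t s; positivity

lemma abs_subordinatedKernel_one_le {α κ c₅ c₆ : ℝ} (hκ : 0 < κ) (hακ : α - 1 < κ)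
    (hc₅ : 0 < c₅) (hc₆ : 0 < c₆) :
    ∃ B, 0 ≤ B ∧ ∀ r > 0, |subordinatedKernel α c₅ c₆ 1 r| ≤ B * r ^ (-2 * κ) := by
  have hmoment : IntegrableOn (fun s => s ^ (κ - α) * halfNormalDensity c₆ 1 s) (Ioi 0) := by
    have := (integrableOn_rpow_mul_exp_neg_mul_sq (s := κ - α) hc₆ (by linarith)).div_const
      √(π * 1 / (4 * c₆))
    exact IntegrableOn.congr_fun this (fun s _ => by simp [halfNormalDensity, mul_div_assoc])
      measurableSet_Ioi
  set m := ∫ s in Ioi 0, s ^ (κ - α) * halfNormalDensity c₆ 1 s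
  have hm : 0 ≤ m := setIntegral_nonneg measurableSet_Ioi fun s (hs : 0 < s) => by
    have := halfNormalDensity_nonneg c₆ 1 s; positivity
  refine ⟨(κ / c₅) ^ κ * m, by positivity, fun r hr => ?_⟩
  have hscale : (κ / (c₅ * r ^ 2)) ^ κ = (κ / c₅) ^ κ * r ^ (-2 * κ) := by
    rw [← div_div, div_rpow (by positivity) (by positivity), ← rpow_natCast, ← rpow_mul hr.le,
      neg_mul, rpow_neg hr.le, div_eq_mul_inv]
    norm_num
  calc |subordinatedKernel α c₅ c₆ 1 r| = subordinatedKernel α c₅ c₆ 1 r :=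
        abs_of_nonneg (subordinatedKernel_nonneg ..)
    _ ≤ (κ / (c₅ * r ^ 2)) ^ κ * m := by
        have := setIntegral_rpow_mul_exp_neg_div_mul_le hκ (by positivity : 0 < c₅ * r ^ 2)
          (fun s _ => halfNormalDensity_nonneg c₆ 1 s) hmoment
        rw [← neg_mul] at this
        exact this
    _ = (κ / c₅) ^ κ * m * r ^ (-2 * κ) := by rw [hscale]; ring

section AddHaar

variable {E : Type*} [NormedAddCommGroup E] [NormedSpace ℝ E] [MeasurableSpace E] [BorelSpace E]
  [FiniteDimensional ℝ E] (μ : Measure E) [μ.IsAddHaarMeasure]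

lemma integrable_min_mul_rpow_norm [Nontrivial E] {A₁ A₂ p₁ p₂ : ℝ} (hA₁ : 0 ≤ A₁) (hA₂ : 0 ≤ A₂)
    (h₁ : -(finrank ℝ E : ℝ) < p₁) (h₂ : p₂ < -(finrank ℝ E : ℝ)) :
    Integrable (fun x : E => min (A₁ * ‖x‖ ^ p₁) (A₂ * ‖x‖ ^ p₂)) μ := by
  have hn : 1 ≤ finrank ℝ E := finrank_pos
  rw [integrable_fun_norm_addHaar μ (f := fun y => min (A₁ * y ^ p₁) (A₂ * y ^ p₂)),
    ← Ioc_union_Ioi_eq_Ioi zero_le_one]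
  have hmeas : AEStronglyMeasurable
      (fun y : ℝ => y ^ (finrank ℝ E - 1) • min (A₁ * y ^ p₁) (A₂ * y ^ p₂)) volume := by
    fun_prop
  refine IntegrableOn.union ?_ ?_
  · refine ((intervalIntegral.intervalIntegrable_rpow' (r := (finrank ℝ E : ℝ) - 1 + p₁)
      (by linarith)).1.const_mul A₁).mono' hmeas.restrict
      (ae_restrict_of_forall_mem measurableSet_Ioc fun y ⟨hy, _⟩ => ?_)
    rw [← pow_pred_mul_rpow hn hy, norm_smul, norm_of_nonneg (by positivity),
      norm_of_nonneg (le_min (by positivity) (by positivity))]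
    exact (mul_le_mul_of_nonneg_left (min_le_left _ _) (by positivity)).trans_eq (by ring)
  · refine ((integrableOn_Ioi_rpow_of_lt (a := (finrank ℝ E : ℝ) - 1 + p₂) (by linarith)
      zero_lt_one).const_mul A₂).mono' hmeas.restrict
      (ae_restrict_of_forall_mem measurableSet_Ioi fun y (hy : 1 < y) => ?_)
    have hy0 : 0 < y := zero_lt_one.trans hy
    rw [← pow_pred_mul_rpow hn hy0, norm_smul, norm_of_nonneg (by positivity),
      norm_of_nonneg (le_min (by positivity) (by positivity))]
    exact (mul_le_mul_of_nonneg_left (min_le_right _ _) (by positivity)).trans_eq (by ring)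

lemma integral_abs_subordinatedKernel_pow_four_rpow {a : ℝ} (ha : 0 < a) (α c₅ c₆ q : ℝ) :
    ∫ x, |subordinatedKernel α c₅ c₆ (a ^ 4) ‖x‖| ^ q ∂μ =
      a ^ ((finrank ℝ E : ℝ) - 2 * α * q) * ∫ x, |subordinatedKernel α c₅ c₆ 1 ‖x‖| ^ q ∂μ := by
  have h := Measure.integral_comp_smul_of_nonneg μ
    (fun x => |subordinatedKernel α c₅ c₆ (a ^ 4) ‖x‖| ^ q) a (hR := ha.le)
  simp only [norm_smul, norm_of_nonneg ha.le, subordinatedKernel_pow_four_mul ha, abs_mul,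
    abs_of_pos (rpow_pos_of_pos ha _), mul_rpow (rpow_nonneg ha.le _) (abs_nonneg _),
    ← rpow_mul ha.le, integral_const_mul, smul_eq_mul] at h
  rw [eq_inv_mul_iff_mul_eq₀ (by positivity)] at h
  rw [← h, ← mul_assoc, ← rpow_natCast, ← rpow_add ha]
  ring_nf

lemma exists_integrable_majorant_abs_subordinatedKernel_one_rpow [Nontrivial E] {α c₅ c₆ q : ℝ}
    (hc₅ : 0 < c₅) (hc₆ : 0 < c₆) (hq : 0 < q) (hα : α - 1 < finrank ℝ E / (2 * q)) :
    ∃ M : E → ℝ, Integrable M μ ∧ ∀ x ≠ 0, |subordinatedKernel α c₅ c₆ 1 ‖x‖| ^ q ≤ M x := by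
  set n : ℝ := (finrank ℝ E : ℝ)
  have hn : 0 < n := Nat.cast_pos.2 finrank_pos
  have hrpow {κ B : ℝ} (hB : 0 ≤ B)
      (hF : ∀ r > 0, |subordinatedKernel α c₅ c₆ 1 r| ≤ B * r ^ (-2 * κ))
      (x : E) (hx : x ≠ 0) :
      |subordinatedKernel α c₅ c₆ 1 ‖x‖| ^ q ≤ B ^ q * ‖x‖ ^ (-2 * κ * q) := by
    have hx' := norm_pos_iff.2 hx
    rw [rpow_mul hx'.le, ← mul_rpow hB (by positivity)]
    exact rpow_le_rpow (abs_nonneg _) (hF _ hx') hq.le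
  have hmax : max (α - 1) 0 < n / (2 * q) := max_lt hα (by positivity)
  obtain ⟨κ₁, hκ₁, hκ₁n⟩ := exists_between hmax
  obtain ⟨κ₂, hκ₂⟩ := exists_gt (max (max (α - 1) 0) (n / (2 * q)))
  simp only [max_lt_iff] at hκ₁ hκ₂
  have h₁ := (lt_div_iff₀ (by positivity)).1 hκ₁n
  have h₂ := (div_lt_iff₀ (by positivity)).1 hκ₂.2
  obtain ⟨B₁, hB₁, hF₁⟩ := abs_subordinatedKernel_one_le hκ₁.2 hκ₁.1 hc₅ hc₆
  obtain ⟨B₂, hB₂, hF₂⟩ := abs_subordinatedKernel_one_le hκ₂.1.2 hκ₂.1.1 hc₅ hc₆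
  refine ⟨fun x => min (B₁ ^ q * ‖x‖ ^ (-2 * κ₁ * q)) (B₂ ^ q * ‖x‖ ^ (-2 * κ₂ * q)),
    integrable_min_mul_rpow_norm μ (by positivity) (by positivity) (by linarith) (by linarith),
    fun x hx => le_min (hrpow hB₁ hF₁ x hx) (hrpow hB₂ hF₂ x hx)⟩

end AddHaar

lemma add_one_div_two_sub_one_lt_div {d q : ℝ} (hd : 1 < d) (hq : 0 < q) (hqd : q < d / (d - 1)) :
    (d + 1) / 2 - 1 < d / (2 * q) := by
  rw [lt_div_iff₀ (by positivity)]
  rw [lt_div_iff₀ (by linarith)] at hqd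
  nlinarith

theorem stmt6_general (d : ℕ) (hd : 2 ≤ d) (c₅ c₆ T q : ℝ) (hc₅ : 0 < c₅) (hc₆ : 0 < c₆)
    (hq1 : 1 < q) (hq2 : q < (d : ℝ) / ((d : ℝ) - 1)) :
    ∃ C > (0:ℝ), ∀ t ∈ Set.Ioc (0:ℝ) T,
      (∫ x : EuclideanSpace ℝ (Fin d),
          |∫ s in Set.Ioi (0:ℝ),
              s ^ (-(((d : ℝ) + 1) / 2)) * Real.exp (-c₅ * ‖x‖ ^ 2 / s) *
                (Real.exp (-c₆ * s ^ 2 / t) / Real.sqrt (Real.pi * t / (4 * c₆)))| ^ q) ^ (1 / q)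
        ≤ C * t ^ (-(((d : ℝ) * (q - 1) + q) / (4 * q))) := by
  have : NeZero d := ⟨by omega⟩
  have hq : 0 < q := by linarith
  have hα : ((d : ℝ) + 1) / 2 - 1 < finrank ℝ (EuclideanSpace ℝ (Fin d)) / (2 * q) := by
    rw [finrank_euclideanSpace_fin]
    exact add_one_div_two_sub_one_lt_div (by exact_mod_cast hd) hq hq2
  obtain ⟨M, hM, hFM⟩ :=
    exists_integrable_majorant_abs_subordinatedKernel_one_rpow volume hc₅ hc₆ hq hα
  have hmajorant : ∫ x, |subordinatedKernel (((d : ℝ) + 1) / 2) c₅ c₆ 1 ‖x‖| ^ q ≤ ∫ x, M x :=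
    integral_mono_of_nonneg (ae_of_all _ fun _ => by positivity) hM
      ((Measure.ae_ne volume 0).mono hFM)
  have hmajorant_nonneg : 0 ≤ ∫ x, M x := (integral_nonneg fun _ => by positivity).trans hmajorant
  refine ⟨(∫ x, M x) ^ (1 / q) + 1, by positivity, fun t ⟨ht, _⟩ => ?_⟩
  obtain ⟨a, ha, rfl⟩ : ∃ a > 0, a ^ 4 = t :=
    ⟨t ^ (1 / 4 : ℝ), by positivity, by rw [← rpow_natCast, ← rpow_mul ht.le]; norm_num⟩
  change (∫ x, |subordinatedKernel (((d : ℝ) + 1) / 2) c₅ c₆ (a ^ 4) ‖x‖| ^ q) ^ (1 / q) ≤ _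
  rw [integral_abs_subordinatedKernel_pow_four_rpow volume ha, finrank_euclideanSpace_fin]
  calc _ ≤ (a ^ ((d : ℝ) - 2 * (((d : ℝ) + 1) / 2) * q) * ∫ x, M x) ^ (1 / q) := by gcongr
    _ = (∫ x, M x) ^ (1 / q) * (a ^ 4) ^ (-(((d : ℝ) * (q - 1) + q) / (4 * q))) := by
      rw [mul_rpow (by positivity) hmajorant_nonneg, ← rpow_mul ha.le, ← rpow_natCast,
        ← rpow_mul ha.le, mul_comm]
      congr 2
      field_simp
      ring
    _ ≤ _ := by gcongr; linarith

/-- Minkowski-route `L^q` estimate of the subordinated kernel, valid for `d ≥ 2` and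
`1 < q < d/(d-1)`. -/
theorem stmt6 (d : ℕ) (hd : 2 ≤ d) (c₅ c₆ T q : ℝ) (hc₅ : 0 < c₅) (hc₆ : 0 < c₆)
    (hT : 0 < T) (hq1 : 1 < q) (hq2 : q < (d : ℝ) / ((d : ℝ) - 1)) :
    ∃ C > (0:ℝ), ∀ t ∈ Set.Ioc (0:ℝ) T,
      (∫ x : EuclideanSpace ℝ (Fin d),
          |∫ s in Set.Ioi (0:ℝ),
              s ^ (-(((d : ℝ) + 1) / 2)) * Real.exp (-c₅ * ‖x‖ ^ 2 / s) *
                (Real.exp (-c₆ * s ^ 2 / t) / Real.sqrt (Real.pi * t / (4 * c₆)))| ^ q) ^ (1 / q)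
        ≤ C * t ^ (-(((d : ℝ) * (q - 1) + q) / (4 * q))) :=
  stmt6_general d hd c₅ c₆ T q hc₅ hc₆ hq1 hq2
end

section
/- Time-difference estimate: let 0 ≤ s < t ≤ T, and suppose a family K(θ) in L^q(ℝ^d) is differentiable in θ with ‖∂_θ K(θ)‖_q ≤ C θ^{-1-β} for θ ∈ (0,T], where β = (2p+d)/(8p). Then for 0 < r < s: ‖K(t-r) − K(s-r)‖_q ≤ C ∫_s^t (θ-r)^{-1-β} dθ, and consequently for γ > 8p/(6p-d), d < 6p, and any ϱ < 1 − β − 1/γ, ∫₀^s ‖K(t-r) − K(s-r)‖_q ‖v(r)‖_p dr ≤ C (t-s)^ϱ ( ∫₀^t ‖v(r)‖_p^γ dr )^{1/γ}. -/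
open Real MeasureTheory Set

/-!
By the mean value inequality, the bound `‖K' θ‖ ≤ C θ^(-1-β)` gives
`‖K b - K a‖ ≤ C (a^(-β) - b^(-β)) / β`, the integral of the bound over `[a, b]`. Interpolating
this between `C a^(-β) / β` and the Lipschitz bound `C (b - a) a^(-1-β)` yields
`‖K (t - r) - K (s - r)‖ ≤ C β^(ϱ-1) (t - s)^ϱ (s - r)^(-(β+ϱ))`, and Hölder's inequality with the
conjugate exponent `γ'` of `γ` bounds the integral in `r`: the kernel `(s - r)^(-(β+ϱ)γ')` is
integrable near `r = s` exactly when `ϱ < 1 - β - 1/γ`.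
-/

theorem integral_rpow_neg_one_sub {β a b : ℝ} (hβ : β ≠ 0) (ha : 0 < a) (hab : a ≤ b) :
    ∫ x in a..b, x ^ (-1 - β) = (a ^ (-β) - b ^ (-β)) / β := by
  rw [integral_rpow (Or.inr ⟨by contrapose! hβ; linarith, notMem_uIcc_of_lt ha (ha.trans_le hab)⟩),
    show -1 - β + 1 = -β by ring, div_neg, ← neg_div, neg_sub]

theorem integral_Ioc_sub_rpow_neg_one_sub {β r s t : ℝ} (hβ : β ≠ 0) (hrs : r < s) (hst : s ≤ t) :
    ∫ θ in Ioc s t, (θ - r) ^ (-1 - β) = ((s - r) ^ (-β) - (t - r) ^ (-β)) / β := by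
  rw [← intervalIntegral.integral_of_le hst,
    intervalIntegral.integral_comp_sub_right (fun x => x ^ (-1 - β)),
    integral_rpow_neg_one_sub hβ (sub_pos.2 hrs) (by linarith)]

theorem le_rpow_mul_rpow_of_le_of_le {V X Y ϱ : ℝ} (hV : 0 ≤ V) (hX : V ≤ X) (hY : V ≤ Y)
    (hϱ0 : 0 ≤ ϱ) (hϱ1 : ϱ ≤ 1) : V ≤ X ^ ϱ * Y ^ (1 - ϱ) :=
  calc V = V ^ ϱ * V ^ (1 - ϱ) := by rw [← rpow_add' hV (by norm_num), add_sub_cancel, rpow_one]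
    _ ≤ X ^ ϱ * Y ^ (1 - ϱ) := mul_le_mul (rpow_le_rpow hV hX hϱ0)
        (rpow_le_rpow hV hY (by linarith)) (by positivity) (rpow_nonneg (hV.trans hX) _)

theorem rpow_neg_sub_rpow_neg_le {β ϱ a b : ℝ} (hβ : 0 < β) (hϱ0 : 0 ≤ ϱ) (hϱ1 : ϱ ≤ 1)
    (ha : 0 < a) (hab : a ≤ b) :
    (a ^ (-β) - b ^ (-β)) / β ≤ β ^ (ϱ - 1) * (b - a) ^ ϱ * a ^ (-(β + ϱ)) := by
  have hmono : b ^ (-β) ≤ a ^ (-β) := rpow_le_rpow_of_nonpos ha hab (by linarith)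
  have hlin : (a ^ (-β) - b ^ (-β)) / β ≤ (b - a) * a ^ (-1 - β) := by
    rw [← integral_rpow_neg_one_sub hβ.ne' ha hab, mul_comm, ← abs_of_nonneg (sub_nonneg.2 hab)]
    refine (le_norm_self _).trans
      (intervalIntegral.norm_integral_le_of_norm_le_const fun x hx => ?_)
    rw [uIoc_of_le hab] at hx
    rw [norm_of_nonneg (rpow_nonneg (ha.trans hx.1).le _)]
    exact rpow_le_rpow_of_nonpos ha hx.1.le (by linarith)
  have hsup : (a ^ (-β) - b ^ (-β)) / β ≤ a ^ (-β) / β := by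
    gcongr; exact sub_le_self _ (rpow_nonneg (ha.le.trans hab) _)
  calc (a ^ (-β) - b ^ (-β)) / β
      ≤ ((b - a) * a ^ (-1 - β)) ^ ϱ * (a ^ (-β) / β) ^ (1 - ϱ) :=
        le_rpow_mul_rpow_of_le_of_le (div_nonneg (by linarith) hβ.le) hlin hsup hϱ0 hϱ1
    _ = β ^ (ϱ - 1) * (b - a) ^ ϱ * a ^ (-(β + ϱ)) := by
        rw [mul_rpow (by linarith) (by positivity), div_rpow (by positivity) hβ.le,
          ← rpow_mul ha.le, ← rpow_mul ha.le, div_eq_mul_inv, ← rpow_neg hβ.le,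
          show -(β + ϱ) = (-1 - β) * ϱ + -β * (1 - ϱ) by ring, rpow_add ha, neg_sub]
        ring

theorem integrableOn_Ioo_sub_rpow {s e : ℝ} (hs : 0 ≤ s) (he : -1 < e) :
    IntegrableOn (fun r => (s - r) ^ e) (Ioo 0 s) := by
  rw [← intervalIntegrable_iff_integrableOn_Ioo_of_le hs]
  simpa using
    ((intervalIntegral.intervalIntegrable_rpow' he (a := 0) (b := s)).comp_sub_left s).symm

theorem integral_Ioo_sub_rpow {s e : ℝ} (hs : 0 ≤ s) (he : -1 < e) :
    ∫ r in Ioo 0 s, (s - r) ^ e = s ^ (e + 1) / (e + 1) := by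
  rw [← integral_Ioc_eq_integral_Ioo, ← intervalIntegral.integral_of_le hs,
    intervalIntegral.integral_comp_sub_left (fun x => x ^ e), sub_self, sub_zero,
    integral_rpow (Or.inl he), zero_rpow (by linarith), sub_zero]

theorem memLp_ofReal_of_integrable_rpow {X : Type*} [MeasurableSpace X] {μ : Measure X}
    {g : X → ℝ} {γ : ℝ} (hγ : 0 < γ) (hg0 : 0 ≤ᵐ[μ] g) (hg : AEStronglyMeasurable g μ)
    (hint : Integrable (fun x => g x ^ γ) μ) : MemLp g (ENNReal.ofReal γ) μ := by
  rw [← integrable_norm_rpow_iff hg (by simpa using hγ) ENNReal.ofReal_ne_top,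
    ENNReal.toReal_ofReal hγ.le]
  refine hint.congr ?_
  filter_upwards [hg0] with x hx
  rw [norm_of_nonneg hx]

theorem integral_Ioo_sub_rpow_mul_le {s α γ γ' : ℝ} (hs : 0 < s) (hγ : γ'.HolderConjugate γ)
    (hα : α * γ' < 1) {g : ℝ → ℝ} (hg0 : 0 ≤ g)
    (hg : AEStronglyMeasurable g (volume.restrict (Ioo 0 s)))
    (hint : IntegrableOn (fun r => g r ^ γ) (Ioo 0 s)) :
    IntegrableOn (fun r => (s - r) ^ (-α) * g r) (Ioo 0 s) ∧
      ∫ r in Ioo 0 s, (s - r) ^ (-α) * g r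
        ≤ (s ^ (1 - α * γ') / (1 - α * γ')) ^ (1 / γ') * (∫ r in Ioo 0 s, g r ^ γ) ^ (1 / γ) := by
  have hpow : ∀ᵐ r ∂(volume.restrict (Ioo 0 s)), ((s - r) ^ (-α)) ^ γ' = (s - r) ^ (-α * γ') := by
    filter_upwards [ae_restrict_mem measurableSet_Ioo] with r hr
    rw [← rpow_mul (by linarith [hr.2])]
  have hw0 : 0 ≤ᵐ[volume.restrict (Ioo 0 s)] fun r => (s - r) ^ (-α) := by
    filter_upwards [ae_restrict_mem measurableSet_Ioo] with r hr
    exact rpow_nonneg (by linarith [hr.2]) _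
  have hwint : IntegrableOn (fun r => (s - r) ^ (-α * γ')) (Ioo 0 s) :=
    integrableOn_Ioo_sub_rpow hs.le (by linarith)
  have hw : MemLp (fun r => (s - r) ^ (-α)) (ENNReal.ofReal γ') (volume.restrict (Ioo 0 s)) :=
    memLp_ofReal_of_integrable_rpow hγ.pos hw0
      (by fun_prop : Measurable fun r : ℝ => (s - r) ^ (-α)).aestronglyMeasurable
      (hwint.congr (hpow.mono fun _ h => h.symm))
  have hgL : MemLp g (ENNReal.ofReal γ) (volume.restrict (Ioo 0 s)) :=
    memLp_ofReal_of_integrable_rpow hγ.symm.pos (.of_forall hg0) hg hint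
  have := hγ.ennrealOfReal
  refine ⟨hw.integrable_mul hgL, ?_⟩
  calc ∫ r in Ioo 0 s, (s - r) ^ (-α) * g r
      ≤ (∫ r in Ioo 0 s, ((s - r) ^ (-α)) ^ γ') ^ (1 / γ') * (∫ r in Ioo 0 s, g r ^ γ) ^ (1 / γ) :=
        integral_mul_le_Lp_mul_Lq_of_nonneg hγ hw0 (.of_forall hg0) hw hgL
    _ = _ := by
        rw [integral_congr_ae hpow, integral_Ioo_sub_rpow hs.le (by linarith),
          show -α * γ' + 1 = 1 - α * γ' by ring]

section NormedSpace

variable {E : Type*} [NormedAddCommGroup E] [NormedSpace ℝ E]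

theorem norm_sub_le_sub_of_norm_deriv_le {f f' : ℝ → E} {G G' : ℝ → ℝ} {a b : ℝ} (hab : a ≤ b)
    (hf : ∀ x ∈ Icc a b, HasDerivAt f (f' x) x) (hG : ∀ x ∈ Icc a b, HasDerivAt G (G' x) x)
    (bound : ∀ x ∈ Icc a b, ‖f' x‖ ≤ G' x) : ‖f b - f a‖ ≤ G b - G a :=
  image_norm_le_of_norm_deriv_right_le_deriv_boundary' (f := fun x => f x - f a)
    (B := fun x => G x - G a)
    (fun x hx => (hf x hx).continuousAt.continuousWithinAt.sub continuousWithinAt_const)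
    (fun x hx => ((hf x (Ico_subset_Icc_self hx)).sub_const _).hasDerivWithinAt)
    (by simp)
    (fun x hx => (hG x hx).continuousAt.continuousWithinAt.sub continuousWithinAt_const)
    (fun x hx => ((hG x (Ico_subset_Icc_self hx)).sub_const _).hasDerivWithinAt)
    (fun x hx => bound x (Ico_subset_Icc_self hx)) (right_mem_Icc.2 hab)

theorem norm_sub_le_of_norm_deriv_le_rpow {f f' : ℝ → E} {C β a b : ℝ} (hβ : β ≠ 0)
    (ha : 0 < a) (hab : a ≤ b) (hf : ∀ x ∈ Icc a b, HasDerivAt f (f' x) x)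
    (bound : ∀ x ∈ Icc a b, ‖f' x‖ ≤ C * x ^ (-1 - β)) :
    ‖f b - f a‖ ≤ C * ((a ^ (-β) - b ^ (-β)) / β) := by
  have hG : ∀ x ∈ Icc a b, HasDerivAt (fun x => -(C / β) * x ^ (-β)) (C * x ^ (-1 - β)) x := by
    intro x hx
    refine ((hasDerivAt_rpow_const (p := -β) (Or.inl (ha.trans_le hx.1).ne')).const_mul
      (-(C / β))).congr_deriv ?_
    rw [show -β - 1 = -1 - β by ring]
    field_simp
  convert norm_sub_le_sub_of_norm_deriv_le hab hf hG bound using 1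
  ring

theorem norm_sub_le_rpow_mul_rpow {f f' : ℝ → E} {C β ϱ a b : ℝ} (hC : 0 ≤ C) (hβ : 0 < β)
    (hϱ0 : 0 ≤ ϱ) (hϱ1 : ϱ ≤ 1) (ha : 0 < a) (hab : a ≤ b)
    (hf : ∀ x ∈ Icc a b, HasDerivAt f (f' x) x)
    (bound : ∀ x ∈ Icc a b, ‖f' x‖ ≤ C * x ^ (-1 - β)) :
    ‖f b - f a‖ ≤ C * β ^ (ϱ - 1) * (b - a) ^ ϱ * a ^ (-(β + ϱ)) :=
  calc ‖f b - f a‖ ≤ C * ((a ^ (-β) - b ^ (-β)) / β) :=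
        norm_sub_le_of_norm_deriv_le_rpow hβ.ne' ha hab hf bound
    _ ≤ C * (β ^ (ϱ - 1) * (b - a) ^ ϱ * a ^ (-(β + ϱ))) :=
        mul_le_mul_of_nonneg_left (rpow_neg_sub_rpow_neg_le hβ hϱ0 hϱ1 ha hab) hC
    _ = _ := by ring

theorem integral_norm_sub_mul_le {f f' : ℝ → E} {T C β ϱ γ γ' s t : ℝ} (hC : 0 ≤ C)
    (hβ : 0 < β) (hϱ : 0 ≤ ϱ) (hγ : γ'.HolderConjugate γ) (hβϱ : (β + ϱ) * γ' < 1)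
    (hf : ∀ θ ∈ Ioc 0 T, HasDerivAt f (f' θ) θ)
    (bound : ∀ θ ∈ Ioc 0 T, ‖f' θ‖ ≤ C * θ ^ (-1 - β)) {g : ℝ → ℝ} (hg0 : 0 ≤ g)
    (hg : AEStronglyMeasurable g (volume.restrict (Ioo 0 s)))
    (hint : IntegrableOn (fun r => g r ^ γ) (Ioo 0 s)) (hs : 0 < s) (hst : s ≤ t) (htT : t ≤ T) :
    ∫ r in Ioc 0 s, ‖f (t - r) - f (s - r)‖ * g r
      ≤ C * β ^ (ϱ - 1) * (t - s) ^ ϱ * ((s ^ (1 - (β + ϱ) * γ') / (1 - (β + ϱ) * γ')) ^ (1 / γ')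
        * (∫ r in Ioo 0 s, g r ^ γ) ^ (1 / γ)) := by
  have hϱ1 : ϱ ≤ 1 := by nlinarith [hγ.lt]
  obtain ⟨hint', hholder⟩ := integral_Ioo_sub_rpow_mul_le hs hγ hβϱ hg0 hg hint
  have hpt : ∀ r ∈ Ioo 0 s, ‖f (t - r) - f (s - r)‖ * g r
      ≤ C * β ^ (ϱ - 1) * (t - s) ^ ϱ * ((s - r) ^ (-(β + ϱ)) * g r) := by
    intro r hr
    have hsub : Icc (s - r) (t - r) ⊆ Ioc 0 T := fun x hx =>
      ⟨by linarith [hx.1, hr.2], by linarith [hx.2, hr.1]⟩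
    have key := norm_sub_le_rpow_mul_rpow hC hβ hϱ hϱ1 (sub_pos.2 hr.2) (by linarith)
      (fun x hx => hf x (hsub hx)) (fun x hx => bound x (hsub hx))
    rw [sub_sub_sub_cancel_right] at key
    calc ‖f (t - r) - f (s - r)‖ * g r
        ≤ C * β ^ (ϱ - 1) * (t - s) ^ ϱ * (s - r) ^ (-(β + ϱ)) * g r :=
          mul_le_mul_of_nonneg_right key (hg0 r)
      _ = _ := by ring
  rw [integral_Ioc_eq_integral_Ioo]
  calc ∫ r in Ioo 0 s, ‖f (t - r) - f (s - r)‖ * g r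
      ≤ ∫ r in Ioo 0 s, C * β ^ (ϱ - 1) * (t - s) ^ ϱ * ((s - r) ^ (-(β + ϱ)) * g r) :=
        integral_mono_of_nonneg (.of_forall fun r => mul_nonneg (norm_nonneg _) (hg0 r))
          (hint'.const_mul _) ((ae_restrict_iff' measurableSet_Ioo).2 (.of_forall hpt))
    _ ≤ _ := by
        rw [integral_const_mul]
        exact mul_le_mul_of_nonneg_left hholder (by positivity)

theorem exists_integral_norm_sub_mul_le {f f' : ℝ → E} {T C β γ ϱ : ℝ} (hT : 0 < T)
    (hC : 0 < C) (hβ : 0 < β) (hγ : 1 < γ) (hβγ : β + 1 / γ < 1) (hϱ : ϱ < 1 - β - 1 / γ)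
    (hf : ∀ θ ∈ Ioc 0 T, HasDerivAt f (f' θ) θ)
    (bound : ∀ θ ∈ Ioc 0 T, ‖f' θ‖ ≤ C * θ ^ (-1 - β)) :
    ∃ C' > 0, ∀ g : ℝ → ℝ, 0 ≤ g → AEStronglyMeasurable g (volume.restrict (Ioc 0 T)) →
      IntegrableOn (fun r => g r ^ γ) (Ioc 0 T) → ∀ s t : ℝ, 0 < s → s < t → t ≤ T →
        ∫ r in Ioc 0 s, ‖f (t - r) - f (s - r)‖ * g r
          ≤ C' * (t - s) ^ ϱ * (∫ r in Ioc 0 t, g r ^ γ) ^ (1 / γ) := by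
  -- Raising `ϱ` costs only a power of `T`, so we may assume `0 < ϱ`.
  set ϱ' := max ϱ ((1 - β - 1 / γ) / 2)
  have hϱ' : 0 ≤ ϱ' := le_max_of_le_right (by linarith)
  have hγ' : γ.conjExponent.HolderConjugate γ := (Real.HolderConjugate.conjExponent hγ).symm
  set γ' := γ.conjExponent
  have hβϱ : (β + ϱ') * γ' < 1 := by
    have h : 1 / γ' = 1 - 1 / γ := by simp only [one_div]; linarith [hγ'.inv_add_inv_eq_one]
    have : ϱ' < 1 - β - 1 / γ := max_lt_iff.2 ⟨hϱ, by linarith⟩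
    exact (lt_div_iff₀ hγ'.pos).1 (by rw [h]; linarith)
  set κ := 1 - (β + ϱ') * γ'
  have hκ : 0 < κ := by linarith
  refine ⟨C * β ^ (ϱ' - 1) * T ^ (ϱ' - ϱ) * (T ^ κ / κ) ^ (1 / γ'), by positivity, ?_⟩
  intro g hg0 hg hint s t hs hst htT
  have hIoo : Ioo 0 s ⊆ Ioc 0 T := fun r hr => ⟨hr.1, by linarith [hr.2]⟩
  have hts : (t - s) ^ ϱ' ≤ T ^ (ϱ' - ϱ) * (t - s) ^ ϱ := by
    calc (t - s) ^ ϱ' = (t - s) ^ (ϱ' - ϱ) * (t - s) ^ ϱ := by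
          rw [← rpow_add (by linarith), sub_add_cancel]
      _ ≤ T ^ (ϱ' - ϱ) * (t - s) ^ ϱ := by
          gcongr
          · exact sub_nonneg.2 (le_max_left _ _)
          · linarith
  have hgγ : ∀ r, 0 ≤ g r ^ γ := fun r => rpow_nonneg (hg0 r) _
  have hIg : (∫ r in Ioo 0 s, g r ^ γ) ^ (1 / γ) ≤ (∫ r in Ioc 0 t, g r ^ γ) ^ (1 / γ) := by
    refine rpow_le_rpow (integral_nonneg hgγ) (setIntegral_mono_set
      (hint.mono_set (Ioc_subset_Ioc_right htT)) (.of_forall hgγ) ?_) (by positivity)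
    exact (show Ioo 0 s ⊆ Ioc 0 t from fun r hr => ⟨hr.1, by linarith [hr.2]⟩).eventuallyLE
  have hIg0 : 0 ≤ (∫ r in Ioo 0 s, g r ^ γ) ^ (1 / γ) := rpow_nonneg (integral_nonneg hgγ) _
  calc ∫ r in Ioc 0 s, ‖f (t - r) - f (s - r)‖ * g r
      ≤ C * β ^ (ϱ' - 1) * (t - s) ^ ϱ' * ((s ^ κ / κ) ^ (1 / γ')
          * (∫ r in Ioo 0 s, g r ^ γ) ^ (1 / γ)) :=
        integral_norm_sub_mul_le hC.le hβ hϱ' hγ' hβϱ hf bound hg0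
          (hg.mono_measure (Measure.restrict_mono hIoo le_rfl)) (hint.mono_set hIoo) hs hst.le htT
    _ ≤ C * β ^ (ϱ' - 1) * (T ^ (ϱ' - ϱ) * (t - s) ^ ϱ) * ((T ^ κ / κ) ^ (1 / γ')
          * (∫ r in Ioc 0 t, g r ^ γ) ^ (1 / γ)) := by
        gcongr
        · exact (one_div_pos.2 hγ'.pos).le
        · linarith
    _ = _ := by ring

end NormedSpace

/-- Time-difference estimate for a differentiable family `K(θ)` in `L^q(ℝ^d)` with
`‖∂_θ K(θ)‖_q ≤ C θ^{-1-β}`, `β = (2p+d)/(8p)`. -/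
theorem stmt11 (d : ℕ) (T p C : ℝ) (hT : 0 < T) (hp : 1 ≤ p) (hd : (d : ℝ) < 6 * p)
    (hC : 0 < C) [Fact (1 ≤ ENNReal.ofReal (2 * p / (2 * p - 1)))]
    (K K' : ℝ → Lp ℝ (ENNReal.ofReal (2 * p / (2 * p - 1)))
          (volume : Measure (EuclideanSpace ℝ (Fin d))))
    (hderiv : ∀ θ ∈ Set.Ioc (0:ℝ) T, HasDerivAt K (K' θ) θ)
    (hbound : ∀ θ ∈ Set.Ioc (0:ℝ) T,
      ‖K' θ‖ ≤ C * θ ^ (-1 - (2 * p + (d : ℝ)) / (8 * p))) :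
    (∀ r s t : ℝ, 0 < r → r < s → s < t → t ≤ T →
      ‖K (t - r) - K (s - r)‖
        ≤ C * ∫ θ in Set.Ioc s t, (θ - r) ^ (-1 - (2 * p + (d : ℝ)) / (8 * p))) ∧
    (∀ γ ϱ : ℝ, 8 * p / (6 * p - (d : ℝ)) < γ →
      ϱ < 1 - (2 * p + (d : ℝ)) / (8 * p) - 1 / γ →
      ∃ C' > (0:ℝ),
        ∀ v : ℝ → Lp ℝ (ENNReal.ofReal p) (volume : Measure (EuclideanSpace ℝ (Fin d))),
          (Measurable fun r => ‖v r‖) →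
          IntegrableOn (fun r => ‖v r‖ ^ γ) (Set.Ioc (0:ℝ) T) →
          ∀ s t : ℝ, 0 < s → s < t → t ≤ T →
            ∫ r in Set.Ioc (0:ℝ) s, ‖K (t - r) - K (s - r)‖ * ‖v r‖
              ≤ C' * (t - s) ^ ϱ * (∫ r in Set.Ioc (0:ℝ) t, ‖v r‖ ^ γ) ^ (1 / γ)) := by
  have hp0 : 0 < p := by linarith
  have hβ : 0 < (2 * p + (d : ℝ)) / (8 * p) := by positivity
  refine ⟨fun r s t hr hrs hst htT => ?_, fun γ ϱ hγ hϱ => ?_⟩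
  · rw [integral_Ioc_sub_rpow_neg_one_sub hβ.ne' hrs hst.le]
    have hsub : Icc (s - r) (t - r) ⊆ Ioc 0 T := fun x hx =>
      ⟨by linarith [hx.1], by linarith [hx.2]⟩
    exact norm_sub_le_of_norm_deriv_le_rpow hβ.ne' (by linarith) (by linarith)
      (fun x hx => hderiv x (hsub hx)) (fun x hx => hbound x (hsub hx))
  · have h6 : 0 < 6 * p - d := by linarith
    have hγ0 : 0 < γ := (div_pos (by positivity) h6).trans hγ
    have hγ1 : 1 < γ := by
      refine lt_of_le_of_lt ?_ hγ
      rw [le_div_iff₀ h6]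
      linarith [(Nat.cast_nonneg d : (0 : ℝ) ≤ d)]
    have hβγ : (2 * p + (d : ℝ)) / (8 * p) + 1 / γ < 1 := by
      rw [div_lt_iff₀ h6] at hγ
      rw [div_add_div _ _ (by positivity) hγ0.ne', div_lt_one (by positivity)]
      nlinarith
    obtain ⟨C', hC', hbd⟩ := exists_integral_norm_sub_mul_le hT hC hβ hγ1 hβγ hϱ hderiv hbound
    -- `Lp ℝ (ofReal p)` has no normed-group instance here, so `‖v r‖ ≥ 0` is read off `Lp.norm_def`.
    exact ⟨C', hC', fun v hv hvint => hbd (fun r => ‖v r‖) (fun r => ENNReal.toReal_nonneg)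
      hv.aestronglyMeasurable hvint⟩
end
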